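/- With R, I, and the weighted degree as above (s1, s2 of weight 2, s3 of weight 1, s12 of weight 2, s13, s23, s123 of weight 3, and I generated by the Bullock–Przytycki relation), for all positive integers a, b, c the element s12^a · s13^b · s23^c is congruent modulo I to a sum Σ_u C_u · s^u + (a ℤ-linear combination of monomials of weighted degree strictly less than 2a + 3(b + c)), where the first sum runs over a finite set of exponent vectors u = (u1,u2,u3,u12,u13,u23,u123) ∈ ℕ^7 with u12·u13·u23 = 0, weighted degree exactly 2a + 3(b + c), and u13·u23 < b·c, and each C_u ∈ ℤ. -/
import Mathlib


open MvPolynomial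

/-- Variables: `X 0 = s1`, `X 1 = s2`, `X 2 = s3`, `X 3 = s12`, `X 4 = s13`, `X 5 = s23`,
`X 6 = s123`. The Bullock–Przytycki relation for the skein algebra of the four-holed
sphere at `q = 1`. -/
noncomputable def bpRel : MvPolynomial (Fin 7) ℤ :=
  X 3 * X 4 * X 5 -
    (X 3 ^ 2 + X 4 ^ 2 + X 5 ^ 2
      + X 3 * (X 0 * X 1 + X 2 * X 6) + X 4 * (X 0 * X 2 + X 1 * X 6)
      + X 5 * (X 1 * X 2 + X 0 * X 6)
      + X 0 * X 1 * X 2 * X 6 + X 0 ^ 2 + X 1 ^ 2 + X 2 ^ 2 + X 6 ^ 2 - 4)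

/-- Weighted degree: weights 2,2,1,2,3,3,3 on `s1,s2,s3,s12,s13,s23,s123`. -/
def wdeg (u : Fin 7 → ℕ) : ℕ :=
  2 * (u 0 + u 1) + u 2 + 2 * u 3 + 3 * (u 4 + u 5 + u 6)

/-! ### Auxiliary development -/

noncomputable def nu (u : Fin 7 → ℕ) : MvPolynomial (Fin 7) ℤ := ∏ i, X i ^ u i

section vec
variable (e0 e1 e2 e3 e4 e5 e6 : ℕ)
lemma vA0 : ![e0,e1,e2,e3,e4,e5,e6] (0 : Fin 7) = e0 := rfl
lemma vA1 : ![e0,e1,e2,e3,e4,e5,e6] (1 : Fin 7) = e1 := rfl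
lemma vA2 : ![e0,e1,e2,e3,e4,e5,e6] (2 : Fin 7) = e2 := rfl
lemma vA3 : ![e0,e1,e2,e3,e4,e5,e6] (3 : Fin 7) = e3 := rfl
lemma vA4 : ![e0,e1,e2,e3,e4,e5,e6] (4 : Fin 7) = e4 := rfl
lemma vA5 : ![e0,e1,e2,e3,e4,e5,e6] (5 : Fin 7) = e5 := rfl
lemma vA6 : ![e0,e1,e2,e3,e4,e5,e6] (6 : Fin 7) = e6 := rfl
end vec

lemma nu_eval (e0 e1 e2 e3 e4 e5 e6 : ℕ) :
    nu ![e0,e1,e2,e3,e4,e5,e6] =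
      X 0 ^ e0 * X 1 ^ e1 * X 2 ^ e2 * X 3 ^ e3 * X 4 ^ e4 * X 5 ^ e5 * X 6 ^ e6 := by
  simp [nu, Fin.prod_univ_seven, vA0, vA1, vA2, vA3, vA4, vA5, vA6]

lemma wdeg_eval (e0 e1 e2 e3 e4 e5 e6 : ℕ) :
    wdeg ![e0,e1,e2,e3,e4,e5,e6] = 2*(e0+e1)+e2+2*e3+3*(e4+e5+e6) := by
  simp [wdeg, vA0, vA1, vA2, vA3, vA4, vA5, vA6]

lemma nu_mul (t u : Fin 7 → ℕ) : nu t * nu u = nu (t + u) := by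
  simp [nu, Pi.add_apply, pow_add, Finset.prod_mul_distrib]

lemma wdeg_add (t u : Fin 7 → ℕ) : wdeg (t + u) = wdeg t + wdeg u := by
  simp only [wdeg, Pi.add_apply]; ring

def GoodT (D m : ℕ) (u : Fin 7 → ℕ) : Prop :=
  wdeg u < D ∨ (wdeg u = D ∧ u 3 * u 4 * u 5 = 0 ∧ u 4 * u 5 < m)

noncomputable def GM (D m : ℕ) : Submodule ℤ (MvPolynomial (Fin 7) ℤ) :=
  Submodule.span ℤ (nu '' {u | GoodT D m u}) ⊔ (Ideal.span {bpRel}).restrictScalars ℤ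

lemma nu_mem_GM {D m : ℕ} {u : Fin 7 → ℕ} (h : GoodT D m u) : nu u ∈ GM D m :=
  Submodule.mem_sup_left (Submodule.subset_span ⟨u, h, rfl⟩)

lemma mul_bpRel_mem (p : MvPolynomial (Fin 7) ℤ) (D m : ℕ) : p * bpRel ∈ GM D m :=
  Submodule.mem_sup_right (Ideal.mul_mem_left _ p (Ideal.subset_span rfl))

lemma GM_mul {t : Fin 7 → ℕ} {D m D' m' : ℕ} (h3 : t 3 = 0) (h4 : t 4 = 0) (h5 : t 5 = 0)
    (hm : m ≤ m') (hD : wdeg t + D = D') {p : MvPolynomial (Fin 7) ℤ}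
    (hp : p ∈ GM D m) : nu t * p ∈ GM D' m' := by
  obtain ⟨y, hy, z, hz, rfl⟩ := Submodule.mem_sup.mp hp
  rw [mul_add]
  refine Submodule.add_mem _ (Submodule.mem_sup_left ?_) (Submodule.mem_sup_right ?_)
  · have hmap : nu t * y ∈ Submodule.map (LinearMap.mulLeft ℤ (nu t))
        (Submodule.span ℤ (nu '' {u | GoodT D m u})) := ⟨y, hy, rfl⟩
    rw [Submodule.map_span] at hmap
    refine Submodule.span_mono ?_ hmap
    rintro _ ⟨_, ⟨u, hu, rfl⟩, rfl⟩
    refine ⟨t + u, ?_, (nu_mul t u).symm⟩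
    have hw := wdeg_add t u
    rcases hu with h | ⟨h1, h2, h3'⟩
    · exact Or.inl (by omega)
    · refine Or.inr ⟨by omega, ?_, ?_⟩
      · simp only [Pi.add_apply, h3, h4, h5, zero_add]; exact h2
      · simp only [Pi.add_apply, h4, h5, zero_add]; omega
  · exact Ideal.mul_mem_left _ (nu t) hz

lemma keyLem (n : ℕ) : ∀ a b c : ℕ, b + c ≤ n → 0 < a → 0 < b → 0 < c →
    X 3 ^ a * X 4 ^ b * X 5 ^ c ∈ GM (2*a+3*(b+c)) (b*c) := by
  induction n with
  | zero => intro a b c h ha hb hc; omega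
  | succ n ih =>
    intro a b c hn ha hb hc
    obtain ⟨a', rfl⟩ : ∃ a', a = a' + 1 := ⟨a - 1, by omega⟩
    obtain ⟨b', rfl⟩ : ∃ b', b = b' + 1 := ⟨b - 1, by omega⟩
    obtain ⟨c', rfl⟩ : ∃ c', c = c' + 1 := ⟨c - 1, by omega⟩
    have hid : X 3 ^ (a' + 1) * X 4 ^ (b' + 1) * X 5 ^ (c' + 1) =
        (X 3 ^ a' * X 4 ^ b' * X 5 ^ c') * bpRel
        + nu ![0,0,0,a'+2,b',c',0] + nu ![0,0,0,a',b'+2,c',0] + nu ![0,0,0,a',b',c'+2,0]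
        + nu ![1,1,0,a'+1,b',c',0] + nu ![0,0,1,a'+1,b',c',1]
        + nu ![1,0,1,a',b'+1,c',0] + nu ![0,1,1,a',b',c'+1,0]
        + nu ![2,0,0,a',b',c',0] + nu ![0,2,0,a',b',c',0] + nu ![0,0,2,a',b',c',0]
        + nu ![0,0,0,a',b',c',2] + (-4 : ℤ) • nu ![0,0,0,a',b',c',0]
        + nu ![0,1,0,0,0,0,1] * (X 3 ^ a' * X 4 ^ (b'+1) * X 5 ^ c')
        + nu ![1,0,0,0,0,0,1] * (X 3 ^ a' * X 4 ^ b' * X 5 ^ (c'+1))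
        + nu ![1,1,1,0,0,0,1] * (X 3 ^ a' * X 4 ^ b' * X 5 ^ c') := by
      simp only [nu_eval, bpRel, zsmul_eq_mul]
      push_cast
      ring
    rw [hid]
    set D := 2*(a'+1)+3*((b'+1)+(c'+1)) with hD
    have hDval : D = 2*a'+3*b'+3*c'+8 := by omega
    repeat' refine Submodule.add_mem _ ?_ ?_
    -- the relation term, then twelve directly good monomials
    · exact mul_bpRel_mem _ _ _
    · exact nu_mem_GM (Or.inl (by rw [wdeg_eval]; omega))
    · exact nu_mem_GM (Or.inl (by rw [wdeg_eval]; omega))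
    · exact nu_mem_GM (Or.inl (by rw [wdeg_eval]; omega))
    · exact nu_mem_GM (Or.inl (by rw [wdeg_eval]; omega))
    · exact nu_mem_GM (Or.inl (by rw [wdeg_eval]; omega))
    · exact nu_mem_GM (Or.inl (by rw [wdeg_eval]; omega))
    · exact nu_mem_GM (Or.inl (by rw [wdeg_eval]; omega))
    · exact nu_mem_GM (Or.inl (by rw [wdeg_eval]; omega))
    · exact nu_mem_GM (Or.inl (by rw [wdeg_eval]; omega))
    · exact nu_mem_GM (Or.inl (by rw [wdeg_eval]; omega))
    · exact nu_mem_GM (Or.inl (by rw [wdeg_eval]; omega))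
    · exact Submodule.smul_mem _ _ (nu_mem_GM (Or.inl (by rw [wdeg_eval]; omega)))
    -- term X1 X6 * X3^a' X4^(b'+1) X5^c'
    · by_cases hac : a' = 0 ∨ c' = 0
      · have heq : (X 3 ^ a' * X 4 ^ (b'+1) * X 5 ^ c' : MvPolynomial (Fin 7) ℤ)
            = nu ![0,0,0,a',b'+1,c',0] := by rw [nu_eval]; ring
        rw [heq, nu_mul]
        refine nu_mem_GM (Or.inr ⟨?_, ?_, ?_⟩)
        · show wdeg (![0,1,0,0,0,0,1] + ![0,0,0,a',b'+1,c',0]) = D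
          rw [wdeg_add, wdeg_eval, wdeg_eval]; omega
        · simp only [Pi.add_apply, vA3, vA4, vA5, zero_add, add_zero]
          rcases hac with h | h <;> simp [h]
        · simp only [Pi.add_apply, vA4, vA5, zero_add, add_zero]
          nlinarith [Nat.succ_pos b']
      · push_neg at hac
        have hsub := ih a' (b'+1) c' (by omega) (by omega) (by omega) (by omega)
        refine GM_mul rfl rfl rfl ?_ ?_ hsub
        · exact Nat.mul_le_mul_left _ (by omega)
        · rw [wdeg_eval]; omega
    -- term X0 X6 * X3^a' X4^b' X5^(c'+1)
    · by_cases hab : a' = 0 ∨ b' = 0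
      · have heq : (X 3 ^ a' * X 4 ^ b' * X 5 ^ (c'+1) : MvPolynomial (Fin 7) ℤ)
            = nu ![0,0,0,a',b',c'+1,0] := by rw [nu_eval]; ring
        rw [heq, nu_mul]
        refine nu_mem_GM (Or.inr ⟨?_, ?_, ?_⟩)
        · show wdeg (![1,0,0,0,0,0,1] + ![0,0,0,a',b',c'+1,0]) = D
          rw [wdeg_add, wdeg_eval, wdeg_eval]; omega
        · simp only [Pi.add_apply, vA3, vA4, vA5, zero_add, add_zero]
          rcases hab with h | h <;> simp [h]
        · simp only [Pi.add_apply, vA4, vA5, zero_add, add_zero]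
          nlinarith [Nat.succ_pos c']
      · push_neg at hab
        have hsub := ih a' b' (c'+1) (by omega) (by omega) (by omega) (by omega)
        refine GM_mul rfl rfl rfl ?_ ?_ hsub
        · exact Nat.mul_le_mul (by omega) (le_refl _)
        · rw [wdeg_eval]; omega
    -- term X0 X1 X2 X6 * X3^a' X4^b' X5^c'
    · by_cases habc : a' = 0 ∨ b' = 0 ∨ c' = 0
      · have heq : (X 3 ^ a' * X 4 ^ b' * X 5 ^ c' : MvPolynomial (Fin 7) ℤ)
            = nu ![0,0,0,a',b',c',0] := by rw [nu_eval]; ring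
        rw [heq, nu_mul]
        refine nu_mem_GM (Or.inr ⟨?_, ?_, ?_⟩)
        · show wdeg (![1,1,1,0,0,0,1] + ![0,0,0,a',b',c',0]) = D
          rw [wdeg_add, wdeg_eval, wdeg_eval]; omega
        · simp only [Pi.add_apply, vA3, vA4, vA5, zero_add, add_zero]
          rcases habc with h | h | h <;> simp [h]
        · simp only [Pi.add_apply, vA4, vA5, zero_add, add_zero]
          nlinarith
      · push_neg at habc
        have hsub := ih a' b' c' (by omega) (by omega) (by omega) (by omega)
        refine GM_mul rfl rfl rfl ?_ ?_ hsub
        · exact Nat.mul_le_mul (by omega) (by omega)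
        · rw [wdeg_eval]; omega

theorem stmt_11 (a b c : ℕ) (ha : 0 < a) (hb : 0 < b) (hc : 0 < c) :
    ∃ (S S' : Finset (Fin 7 → ℕ)) (C C' : (Fin 7 → ℕ) → ℤ),
      (∀ u ∈ S, u 3 * u 4 * u 5 = 0 ∧ wdeg u = 2 * a + 3 * (b + c) ∧ u 4 * u 5 < b * c) ∧
      (∀ u ∈ S', wdeg u < 2 * a + 3 * (b + c)) ∧
      X 3 ^ a * X 4 ^ b * X 5 ^ c -
        (∑ u ∈ S, C u • ∏ i, X i ^ u i + ∑ u ∈ S', C' u • ∏ i, X i ^ u i) ∈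
        Ideal.span {bpRel} := by
  have hkey := keyLem (b + c) a b c le_rfl ha hb hc
  set D := 2*a+3*(b+c) with hD
  obtain ⟨y, hy, z, hz, hsum⟩ := Submodule.mem_sup.mp hkey
  rw [Finsupp.mem_span_image_iff_linearCombination] at hy
  obtain ⟨l, hl, rfl⟩ := hy
  refine ⟨l.support.filter (fun u => wdeg u = D), l.support.filter (fun u => ¬ wdeg u = D),
    l, l, ?_, ?_, ?_⟩
  · intro u hu
    rw [Finset.mem_filter] at hu
    have hg : GoodT D (b*c) u := hl hu.1
    rcases hg with h | ⟨h1, h2, h3⟩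
    · omega
    · exact ⟨h2, hu.2, h3⟩
  · intro u hu
    rw [Finset.mem_filter] at hu
    have hg : GoodT D (b*c) u := hl hu.1
    rcases hg with h | ⟨h1, h2, h3⟩
    · exact h
    · exact absurd h1 hu.2
  · have hsplit : (∑ u ∈ l.support.filter (fun u => wdeg u = D), l u • ∏ i, X i ^ u i)
        + ∑ u ∈ l.support.filter (fun u => ¬ wdeg u = D), l u • ∏ i, X i ^ u i
        = Finsupp.linearCombination ℤ nu l := by
      rw [Finsupp.linearCombination_apply, Finsupp.sum,
        Finset.sum_filter_add_sum_filter_not]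
      rfl
    rw [hsplit]
    have : X 3 ^ a * X 4 ^ b * X 5 ^ c - Finsupp.linearCombination ℤ nu l = z := by
      rw [← hsum]; ring
    rw [this]
    exact hz
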